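/- arXiv:1908.04029 — 6 statements merged into one kernel-verified Lean document; each statement's English description precedes it below -/
import Mathlib

section
/- For each total cyclic order R on Fin 4 (a ternary relation satisfying the Huntington axioms), define f : Fin 4 → ℤ by letting fᵢ ∈ {0,1} be 0 if the restriction of R to the three vertices other than i (listed in increasing order) is the even cyclic order and 1 if it is the odd one. Then the alternating sum f₀ − f₁ + f₂ − f₃ equals 0. -/
/-- A ternary relation satisfying the Huntington axioms of a total cyclic order. -/
def IsHuntingtonCyclicOrder {α : Type*} (R : α → α → α → Prop) : Prop :=
  (∀ a b c, R a b c → R b c a) ∧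
  (∀ a b c, R a b c → ¬ R c b a) ∧
  (∀ a b c d, R a b c → R a c d → R a b d) ∧
  (∀ a b c, a ≠ b → b ≠ c → a ≠ c → R a b c ∨ R c b a)

open Classical in
/-- For a total cyclic order `R` on `Fin 4`, the face-parity function `f`
(0 if the restriction to the triple omitting `i`, in increasing order, is even;
1 if it is odd) has vanishing alternating sum: `f₀ - f₁ + f₂ - f₃ = 0`. -/
theorem face_parity_alt_sum_zero (R : Fin 4 → Fin 4 → Fin 4 → Prop)
    (hR : IsHuntingtonCyclicOrder R) (f : Fin 4 → ℤ)
    (h0 : f 0 = if R 1 2 3 then 0 else 1)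
    (h1 : f 1 = if R 0 2 3 then 0 else 1)
    (h2 : f 2 = if R 0 1 3 then 0 else 1)
    (h3 : f 3 = if R 0 1 2 then 0 else 1) :
    f 0 - f 1 + f 2 - f 3 = 0 := by

  obtain ⟨cyc, asym, trans, tot⟩ := hR
  have key : ∀ a b c d : Fin 4, R a b c → R a c d → R d b a → False :=
    fun a b c d x y z => asym a b d (trans a b c d x y) z
  by_cases h012 : R 0 1 2 <;> by_cases h013 : R 0 1 3 <;>
    by_cases h023 : R 0 2 3 <;> by_cases h123 : R 1 2 3
  · -- (True, True, True, True)
    simp [h0,h1,h2,h3,h012,h013,h023,h123]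
  · -- (True, True, True, False)
    exfalso
    have r123 : R 3 2 1 := (tot 1 2 3 (by decide) (by decide) (by decide)).resolve_left h123
    exact key 2 0 1 3 (cyc _ _ _ (cyc _ _ _ h012)) (cyc _ _ _ r123) (cyc _ _ _ (cyc _ _ _ h023))
  · -- (True, True, False, True)
    exfalso
    have r023 : R 3 2 0 := (tot 0 2 3 (by decide) (by decide) (by decide)).resolve_left h023
    exact key 3 0 1 2 (cyc _ _ _ (cyc _ _ _ h013)) (cyc _ _ _ (cyc _ _ _ h123)) (cyc _ _ _ r023)
  · -- (True, True, False, False)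
    simp [h0,h1,h2,h3,h012,h013,h023,h123]
  · -- (True, False, True, True)
    exfalso
    have r013 : R 3 1 0 := (tot 0 1 3 (by decide) (by decide) (by decide)).resolve_left h013
    exact key 0 1 2 3 h012 h023 r013
  · -- (True, False, True, False)
    exfalso
    have r013 : R 3 1 0 := (tot 0 1 3 (by decide) (by decide) (by decide)).resolve_left h013
    have r123 : R 3 2 1 := (tot 1 2 3 (by decide) (by decide) (by decide)).resolve_left h123
    exact key 0 1 2 3 h012 h023 r013
  · -- (True, False, False, True)
    simp [h0,h1,h2,h3,h012,h013,h023,h123]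
  · -- (True, False, False, False)
    exfalso
    have r013 : R 3 1 0 := (tot 0 1 3 (by decide) (by decide) (by decide)).resolve_left h013
    have r023 : R 3 2 0 := (tot 0 2 3 (by decide) (by decide) (by decide)).resolve_left h023
    have r123 : R 3 2 1 := (tot 1 2 3 (by decide) (by decide) (by decide)).resolve_left h123
    exact key 1 2 0 3 (cyc _ _ _ h012) (cyc _ _ _ r013) r123
  · -- (False, True, True, True)
    exfalso
    have r012 : R 2 1 0 := (tot 0 1 2 (by decide) (by decide) (by decide)).resolve_left h012
    exact key 1 0 2 3 (cyc _ _ _ r012) h123 (cyc _ _ _ (cyc _ _ _ h013))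
  · -- (False, True, True, False)
    simp [h0,h1,h2,h3,h012,h013,h023,h123]
  · -- (False, True, False, True)
    exfalso
    have r012 : R 2 1 0 := (tot 0 1 2 (by decide) (by decide) (by decide)).resolve_left h012
    have r023 : R 3 2 0 := (tot 0 2 3 (by decide) (by decide) (by decide)).resolve_left h023
    exact key 2 1 0 3 r012 (cyc _ _ _ r023) (cyc _ _ _ (cyc _ _ _ h123))
  · -- (False, True, False, False)
    exfalso
    have r012 : R 2 1 0 := (tot 0 1 2 (by decide) (by decide) (by decide)).resolve_left h012
    have r023 : R 3 2 0 := (tot 0 2 3 (by decide) (by decide) (by decide)).resolve_left h023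
    have r123 : R 3 2 1 := (tot 1 2 3 (by decide) (by decide) (by decide)).resolve_left h123
    exact key 0 2 1 3 (cyc _ _ _ (cyc _ _ _ r012)) h013 r023
  · -- (False, False, True, True)
    simp [h0,h1,h2,h3,h012,h013,h023,h123]
  · -- (False, False, True, False)
    exfalso
    have r012 : R 2 1 0 := (tot 0 1 2 (by decide) (by decide) (by decide)).resolve_left h012
    have r013 : R 3 1 0 := (tot 0 1 3 (by decide) (by decide) (by decide)).resolve_left h013
    have r123 : R 3 2 1 := (tot 1 2 3 (by decide) (by decide) (by decide)).resolve_left h123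
    exact key 3 1 0 2 r013 (cyc _ _ _ (cyc _ _ _ h023)) (cyc _ _ _ r123)
  · -- (False, False, False, True)
    exfalso
    have r012 : R 2 1 0 := (tot 0 1 2 (by decide) (by decide) (by decide)).resolve_left h012
    have r013 : R 3 1 0 := (tot 0 1 3 (by decide) (by decide) (by decide)).resolve_left h013
    have r023 : R 3 2 0 := (tot 0 2 3 (by decide) (by decide) (by decide)).resolve_left h023
    exact key 2 1 0 3 r012 (cyc _ _ _ r023) (cyc _ _ _ (cyc _ _ _ h123))
  · -- (False, False, False, False)
    simp [h0,h1,h2,h3,h012,h013,h023,h123]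
end

section
/- A function f : Fin 4 → {0,1} ⊆ ℤ arises as the face-parity function of some total cyclic order on Fin 4 (as in the binary Chern cocycle construction) if and only if f₀ − f₁ + f₂ − f₃ = 0; moreover in that case the total cyclic order on Fin 4 inducing f is unique. -/
open Classical in
/-- `f` is the face-parity function of the total cyclic order `R` on `Fin 4`:
`f i` is 0 if the restriction of `R` to the triple omitting `i` (in increasing
order `a < b < c`) satisfies `R a b c`, and 1 if it satisfies `R c b a`. -/
noncomputable def FaceParity (R : Fin 4 → Fin 4 → Fin 4 → Prop) (f : Fin 4 → ℤ) : Prop :=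
  f 0 = (if R 1 2 3 then 0 else 1) ∧
  f 1 = (if R 0 2 3 then 0 else 1) ∧
  f 2 = (if R 0 1 3 then 0 else 1) ∧
  f 3 = (if R 0 1 2 then 0 else 1)

variable {R : Fin 4 → Fin 4 → Fin 4 → Prop}

lemma hunt_rot (hR : IsHuntingtonCyclicOrder R) (a b c : Fin 4) : R a b c ↔ R b c a :=
  ⟨hR.1 a b c, fun h => hR.1 c a b (hR.1 b c a h)⟩

lemma hunt_nd1 (hR : IsHuntingtonCyclicOrder R) (a b : Fin 4) : ¬ R a b a :=
  fun h => hR.2.1 a b a h h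

lemma hunt_nd2 (hR : IsHuntingtonCyclicOrder R) (a b : Fin 4) : ¬ R a a b :=
  fun h => hunt_nd1 hR a b (hR.1 a a b h)

lemma hunt_nd3 (hR : IsHuntingtonCyclicOrder R) (a b : Fin 4) : ¬ R a b b :=
  fun h => hunt_nd1 hR b a (hR.1 b b a (hR.1 a b b h))

lemma hunt_flip (hR : IsHuntingtonCyclicOrder R) (a b c : Fin 4)
    (hab : a ≠ b) (hbc : b ≠ c) (hac : a ≠ c) : R c b a ↔ ¬ R a b c :=
  ⟨fun h h' => hR.2.1 a b c h' h, fun h => (hR.2.2.2 a b c hab hbc hac).resolve_left h⟩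

lemma hunt_tri (hR : IsHuntingtonCyclicOrder R) (a x y z : Fin 4)
    (h1 : R a x y) (h2 : R a y z) (h3 : R a z x) : False :=
  hR.2.1 a x z (hR.2.2.1 a x y z h1 h2) (hR.1 a z x h3)

def Rp (p : Fin 4 → Fin 4) (a b c : Fin 4) : Prop :=
  0 < ((p b).val + 4 - (p a).val) % 4 ∧
    ((p b).val + 4 - (p a).val) % 4 < ((p c).val + 4 - (p a).val) % 4


instance (p : Fin 4 → Fin 4) (a b c : Fin 4) : Decidable (Rp p a b c) :=
  inferInstanceAs (Decidable (_ ∧ _))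


lemma det {R R' : Fin 4 → Fin 4 → Fin 4 → Prop}
    (hR : IsHuntingtonCyclicOrder R) (hR' : IsHuntingtonCyclicOrder R')
    (hA : R 1 2 3 ↔ R' 1 2 3) (hB : R 0 2 3 ↔ R' 0 2 3)
    (hC : R 0 1 3 ↔ R' 0 1 3) (hD : R 0 1 2 ↔ R' 0 1 2) : R = R' := by
  funext a b c
  refine propext ?_
  fin_cases a
  · fin_cases b
    · fin_cases c
      · exact iff_of_false (hunt_nd2 hR 0 0) (hunt_nd2 hR' 0 0)
      · exact iff_of_false (hunt_nd2 hR 0 1) (hunt_nd2 hR' 0 1)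
      · exact iff_of_false (hunt_nd2 hR 0 2) (hunt_nd2 hR' 0 2)
      · exact iff_of_false (hunt_nd2 hR 0 3) (hunt_nd2 hR' 0 3)
    · fin_cases c
      · exact iff_of_false (hunt_nd1 hR 0 1) (hunt_nd1 hR' 0 1)
      · exact iff_of_false (hunt_nd3 hR 0 1) (hunt_nd3 hR' 0 1)
      · exact (Iff.rfl).trans ((hD).trans (Iff.rfl).symm)
      · exact (Iff.rfl).trans ((hC).trans (Iff.rfl).symm)
    · fin_cases c
      · exact iff_of_false (hunt_nd1 hR 0 2) (hunt_nd1 hR' 0 2)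
      · exact (((hunt_rot hR 0 2 1).trans (hunt_flip hR 0 1 2 (by decide) (by decide) (by decide)))).trans (((not_congr hD)).trans (((hunt_rot hR' 0 2 1).trans (hunt_flip hR' 0 1 2 (by decide) (by decide) (by decide)))).symm)
      · exact iff_of_false (hunt_nd3 hR 0 2) (hunt_nd3 hR' 0 2)
      · exact (Iff.rfl).trans ((hB).trans (Iff.rfl).symm)
    · fin_cases c
      · exact iff_of_false (hunt_nd1 hR 0 3) (hunt_nd1 hR' 0 3)
      · exact (((hunt_rot hR 0 3 1).trans (hunt_flip hR 0 1 3 (by decide) (by decide) (by decide)))).trans (((not_congr hC)).trans (((hunt_rot hR' 0 3 1).trans (hunt_flip hR' 0 1 3 (by decide) (by decide) (by decide)))).symm)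
      · exact (((hunt_rot hR 0 3 2).trans (hunt_flip hR 0 2 3 (by decide) (by decide) (by decide)))).trans (((not_congr hB)).trans (((hunt_rot hR' 0 3 2).trans (hunt_flip hR' 0 2 3 (by decide) (by decide) (by decide)))).symm)
      · exact iff_of_false (hunt_nd3 hR 0 3) (hunt_nd3 hR' 0 3)
  · fin_cases b
    · fin_cases c
      · exact iff_of_false (hunt_nd3 hR 1 0) (hunt_nd3 hR' 1 0)
      · exact iff_of_false (hunt_nd1 hR 1 0) (hunt_nd1 hR' 1 0)
      · exact (((hunt_rot hR 1 0 2).trans ((hunt_rot hR 0 2 1).trans (hunt_flip hR 0 1 2 (by decide) (by decide) (by decide))))).trans (((not_congr hD)).trans (((hunt_rot hR' 1 0 2).trans ((hunt_rot hR' 0 2 1).trans (hunt_flip hR' 0 1 2 (by decide) (by decide) (by decide))))).symm)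
      · exact (((hunt_rot hR 1 0 3).trans ((hunt_rot hR 0 3 1).trans (hunt_flip hR 0 1 3 (by decide) (by decide) (by decide))))).trans (((not_congr hC)).trans (((hunt_rot hR' 1 0 3).trans ((hunt_rot hR' 0 3 1).trans (hunt_flip hR' 0 1 3 (by decide) (by decide) (by decide))))).symm)
    · fin_cases c
      · exact iff_of_false (hunt_nd2 hR 1 0) (hunt_nd2 hR' 1 0)
      · exact iff_of_false (hunt_nd2 hR 1 1) (hunt_nd2 hR' 1 1)
      · exact iff_of_false (hunt_nd2 hR 1 2) (hunt_nd2 hR' 1 2)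
      · exact iff_of_false (hunt_nd2 hR 1 3) (hunt_nd2 hR' 1 3)
    · fin_cases c
      · exact ((hunt_rot hR 0 1 2).symm).trans ((hD).trans ((hunt_rot hR' 0 1 2).symm).symm)
      · exact iff_of_false (hunt_nd1 hR 1 2) (hunt_nd1 hR' 1 2)
      · exact iff_of_false (hunt_nd3 hR 1 2) (hunt_nd3 hR' 1 2)
      · exact (Iff.rfl).trans ((hA).trans (Iff.rfl).symm)
    · fin_cases c
      · exact ((hunt_rot hR 0 1 3).symm).trans ((hC).trans ((hunt_rot hR' 0 1 3).symm).symm)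
      · exact iff_of_false (hunt_nd1 hR 1 3) (hunt_nd1 hR' 1 3)
      · exact (((hunt_rot hR 1 3 2).trans (hunt_flip hR 1 2 3 (by decide) (by decide) (by decide)))).trans (((not_congr hA)).trans (((hunt_rot hR' 1 3 2).trans (hunt_flip hR' 1 2 3 (by decide) (by decide) (by decide)))).symm)
      · exact iff_of_false (hunt_nd3 hR 1 3) (hunt_nd3 hR' 1 3)
  · fin_cases b
    · fin_cases c
      · exact iff_of_false (hunt_nd3 hR 2 0) (hunt_nd3 hR' 2 0)
      · exact (hunt_rot hR 2 0 1).trans ((hD).trans (hunt_rot hR' 2 0 1).symm)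
      · exact iff_of_false (hunt_nd1 hR 2 0) (hunt_nd1 hR' 2 0)
      · exact (((hunt_rot hR 2 0 3).trans ((hunt_rot hR 0 3 2).trans (hunt_flip hR 0 2 3 (by decide) (by decide) (by decide))))).trans (((not_congr hB)).trans (((hunt_rot hR' 2 0 3).trans ((hunt_rot hR' 0 3 2).trans (hunt_flip hR' 0 2 3 (by decide) (by decide) (by decide))))).symm)
    · fin_cases c
      · exact (hunt_flip hR 0 1 2 (by decide) (by decide) (by decide)).trans (((not_congr hD)).trans (hunt_flip hR' 0 1 2 (by decide) (by decide) (by decide)).symm)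
      · exact iff_of_false (hunt_nd3 hR 2 1) (hunt_nd3 hR' 2 1)
      · exact iff_of_false (hunt_nd1 hR 2 1) (hunt_nd1 hR' 2 1)
      · exact (((hunt_rot hR 2 1 3).trans ((hunt_rot hR 1 3 2).trans (hunt_flip hR 1 2 3 (by decide) (by decide) (by decide))))).trans (((not_congr hA)).trans (((hunt_rot hR' 2 1 3).trans ((hunt_rot hR' 1 3 2).trans (hunt_flip hR' 1 2 3 (by decide) (by decide) (by decide))))).symm)
    · fin_cases c
      · exact iff_of_false (hunt_nd2 hR 2 0) (hunt_nd2 hR' 2 0)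
      · exact iff_of_false (hunt_nd2 hR 2 1) (hunt_nd2 hR' 2 1)
      · exact iff_of_false (hunt_nd2 hR 2 2) (hunt_nd2 hR' 2 2)
      · exact iff_of_false (hunt_nd2 hR 2 3) (hunt_nd2 hR' 2 3)
    · fin_cases c
      · exact ((hunt_rot hR 0 2 3).symm).trans ((hB).trans ((hunt_rot hR' 0 2 3).symm).symm)
      · exact ((hunt_rot hR 1 2 3).symm).trans ((hA).trans ((hunt_rot hR' 1 2 3).symm).symm)
      · exact iff_of_false (hunt_nd1 hR 2 3) (hunt_nd1 hR' 2 3)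
      · exact iff_of_false (hunt_nd3 hR 2 3) (hunt_nd3 hR' 2 3)
  · fin_cases b
    · fin_cases c
      · exact iff_of_false (hunt_nd3 hR 3 0) (hunt_nd3 hR' 3 0)
      · exact (hunt_rot hR 3 0 1).trans ((hC).trans (hunt_rot hR' 3 0 1).symm)
      · exact (hunt_rot hR 3 0 2).trans ((hB).trans (hunt_rot hR' 3 0 2).symm)
      · exact iff_of_false (hunt_nd1 hR 3 0) (hunt_nd1 hR' 3 0)
    · fin_cases c
      · exact (hunt_flip hR 0 1 3 (by decide) (by decide) (by decide)).trans (((not_congr hC)).trans (hunt_flip hR' 0 1 3 (by decide) (by decide) (by decide)).symm)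
      · exact iff_of_false (hunt_nd3 hR 3 1) (hunt_nd3 hR' 3 1)
      · exact (hunt_rot hR 3 1 2).trans ((hA).trans (hunt_rot hR' 3 1 2).symm)
      · exact iff_of_false (hunt_nd1 hR 3 1) (hunt_nd1 hR' 3 1)
    · fin_cases c
      · exact (hunt_flip hR 0 2 3 (by decide) (by decide) (by decide)).trans (((not_congr hB)).trans (hunt_flip hR' 0 2 3 (by decide) (by decide) (by decide)).symm)
      · exact (hunt_flip hR 1 2 3 (by decide) (by decide) (by decide)).trans (((not_congr hA)).trans (hunt_flip hR' 1 2 3 (by decide) (by decide) (by decide)).symm)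
      · exact iff_of_false (hunt_nd3 hR 3 2) (hunt_nd3 hR' 3 2)
      · exact iff_of_false (hunt_nd1 hR 3 2) (hunt_nd1 hR' 3 2)
    · fin_cases c
      · exact iff_of_false (hunt_nd2 hR 3 0) (hunt_nd2 hR' 3 0)
      · exact iff_of_false (hunt_nd2 hR 3 1) (hunt_nd2 hR' 3 1)
      · exact iff_of_false (hunt_nd2 hR 3 2) (hunt_nd2 hR' 3 2)
      · exact iff_of_false (hunt_nd2 hR 3 3) (hunt_nd2 hR' 3 3)

open Classical in
lemma base0 {P : Prop} {x : ℤ} (h : x = if P then 0 else 1)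
    (hx : x = 0) : P := by
  by_contra hP; rw [if_neg hP] at h; omega

open Classical in
lemma base1 {P : Prop} {x : ℤ} (h : x = if P then 0 else 1)
    (hx : x = 1) : ¬ P := by
  intro hP; rw [if_pos hP] at h; omega

/-- A binary function `f : Fin 4 → {0,1}` is the face-parity function of some
total cyclic order on `Fin 4` iff `f₀ - f₁ + f₂ - f₃ = 0`, and in that case the
inducing total cyclic order is unique. -/
theorem face_parity_iff_cocycle (f : Fin 4 → ℤ) (hf : ∀ i, f i = 0 ∨ f i = 1) :
    (∃! R : Fin 4 → Fin 4 → Fin 4 → Prop,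
        IsHuntingtonCyclicOrder R ∧ FaceParity R f) ↔
      f 0 - f 1 + f 2 - f 3 = 0 := by
  constructor
  · rintro ⟨R, ⟨hR, h0, h1, h2, h3⟩, -⟩
    rw [h0, h1, h2, h3]
    by_cases hA : R 1 2 3 <;> by_cases hB : R 0 2 3 <;>
      by_cases hC : R 0 1 3 <;> by_cases hD : R 0 1 2 <;>
      first
        | exact (hunt_tri hR 0 1 2 3 hD hB (hR.1 1 0 3 (hR.1 3 1 0 ((hunt_flip hR 0 1 3 (by decide) (by decide) (by decide)).mpr hC)))).elim
        | exact (hunt_tri hR 0 1 3 2 hC (hR.1 2 0 3 (hR.1 3 2 0 ((hunt_flip hR 0 2 3 (by decide) (by decide) (by decide)).mpr hB))) (hR.1 1 0 2 (hR.1 2 1 0 ((hunt_flip hR 0 1 2 (by decide) (by decide) (by decide)).mpr hD)))).elim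
        | exact (hunt_tri hR 1 2 3 0 hA (hR.1 0 1 3 hC) (hR.1 2 1 0 ((hunt_flip hR 0 1 2 (by decide) (by decide) (by decide)).mpr hD))).elim
        | exact (hunt_tri hR 1 3 2 0 (hR.1 2 1 3 (hR.1 3 2 1 ((hunt_flip hR 1 2 3 (by decide) (by decide) (by decide)).mpr hA))) (hR.1 0 1 2 hD) (hR.1 3 1 0 ((hunt_flip hR 0 1 3 (by decide) (by decide) (by decide)).mpr hC))).elim
        | exact (hunt_tri hR 2 3 1 0 (hR.1 1 2 3 hA) ((hunt_flip hR 0 1 2 (by decide) (by decide) (by decide)).mpr hD) (hR.1 3 2 0 ((hunt_flip hR 0 2 3 (by decide) (by decide) (by decide)).mpr hB))).elim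
        | exact (hunt_tri hR 2 1 3 0 (hR.1 3 2 1 ((hunt_flip hR 1 2 3 (by decide) (by decide) (by decide)).mpr hA)) (hR.1 0 2 3 hB) (hR.1 1 2 0 (hR.1 0 1 2 hD))).elim
        | exact (hunt_tri hR 3 1 2 0 (hR.1 2 3 1 (hR.1 1 2 3 hA)) ((hunt_flip hR 0 2 3 (by decide) (by decide) (by decide)).mpr hB) (hR.1 1 3 0 (hR.1 0 1 3 hC))).elim
        | exact (hunt_tri hR 3 2 1 0 ((hunt_flip hR 1 2 3 (by decide) (by decide) (by decide)).mpr hA) ((hunt_flip hR 0 1 3 (by decide) (by decide) (by decide)).mpr hC) (hR.1 2 3 0 (hR.1 0 2 3 hB))).elim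
        | simp [hA, hB, hC, hD]
  · intro hsum
    rcases hf 0 with e0 | e0 <;> rcases hf 1 with e1 | e1 <;>
      rcases hf 2 with e2 | e2 <;> rcases hf 3 with e3 | e3 <;>
      [skip; omega; omega; skip; omega; omega; skip; omega;
       omega; skip; omega; omega; skip; omega; omega; skip]
    · refine ⟨Rp ![0,1,2,3], ⟨by unfold IsHuntingtonCyclicOrder; decide, ?_, ?_, ?_, ?_⟩, ?_⟩
      · rw [e0, if_pos (show Rp ![0,1,2,3] 1 2 3 by decide)]
      · rw [e1, if_pos (show Rp ![0,1,2,3] 0 2 3 by decide)]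
      · rw [e2, if_pos (show Rp ![0,1,2,3] 0 1 3 by decide)]
      · rw [e3, if_pos (show Rp ![0,1,2,3] 0 1 2 by decide)]
      · rintro R' ⟨hR', g0, g1, g2, g3⟩
        exact det hR' (by unfold IsHuntingtonCyclicOrder; decide)
          (iff_of_true (base0 g0 e0) (by decide)) (iff_of_true (base0 g1 e1) (by decide)) (iff_of_true (base0 g2 e2) (by decide)) (iff_of_true (base0 g3 e3) (by decide))
    · refine ⟨Rp ![0,3,1,2], ⟨by unfold IsHuntingtonCyclicOrder; decide, ?_, ?_, ?_, ?_⟩, ?_⟩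
      · rw [e0, if_pos (show Rp ![0,3,1,2] 1 2 3 by decide)]
      · rw [e1, if_pos (show Rp ![0,3,1,2] 0 2 3 by decide)]
      · rw [e2, if_neg (show ¬ Rp ![0,3,1,2] 0 1 3 by decide)]
      · rw [e3, if_neg (show ¬ Rp ![0,3,1,2] 0 1 2 by decide)]
      · rintro R' ⟨hR', g0, g1, g2, g3⟩
        exact det hR' (by unfold IsHuntingtonCyclicOrder; decide)
          (iff_of_true (base0 g0 e0) (by decide)) (iff_of_true (base0 g1 e1) (by decide)) (iff_of_false (base1 g2 e2) (by decide)) (iff_of_false (base1 g3 e3) (by decide))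
    · refine ⟨Rp ![0,2,3,1], ⟨by unfold IsHuntingtonCyclicOrder; decide, ?_, ?_, ?_, ?_⟩, ?_⟩
      · rw [e0, if_pos (show Rp ![0,2,3,1] 1 2 3 by decide)]
      · rw [e1, if_neg (show ¬ Rp ![0,2,3,1] 0 2 3 by decide)]
      · rw [e2, if_neg (show ¬ Rp ![0,2,3,1] 0 1 3 by decide)]
      · rw [e3, if_pos (show Rp ![0,2,3,1] 0 1 2 by decide)]
      · rintro R' ⟨hR', g0, g1, g2, g3⟩
        exact det hR' (by unfold IsHuntingtonCyclicOrder; decide)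
          (iff_of_true (base0 g0 e0) (by decide)) (iff_of_false (base1 g1 e1) (by decide)) (iff_of_false (base1 g2 e2) (by decide)) (iff_of_true (base0 g3 e3) (by decide))
    · refine ⟨Rp ![0,2,1,3], ⟨by unfold IsHuntingtonCyclicOrder; decide, ?_, ?_, ?_, ?_⟩, ?_⟩
      · rw [e0, if_neg (show ¬ Rp ![0,2,1,3] 1 2 3 by decide)]
      · rw [e1, if_pos (show Rp ![0,2,1,3] 0 2 3 by decide)]
      · rw [e2, if_pos (show Rp ![0,2,1,3] 0 1 3 by decide)]
      · rw [e3, if_neg (show ¬ Rp ![0,2,1,3] 0 1 2 by decide)]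
      · rintro R' ⟨hR', g0, g1, g2, g3⟩
        exact det hR' (by unfold IsHuntingtonCyclicOrder; decide)
          (iff_of_false (base1 g0 e0) (by decide)) (iff_of_true (base0 g1 e1) (by decide)) (iff_of_true (base0 g2 e2) (by decide)) (iff_of_false (base1 g3 e3) (by decide))
    · refine ⟨Rp ![0,1,3,2], ⟨by unfold IsHuntingtonCyclicOrder; decide, ?_, ?_, ?_, ?_⟩, ?_⟩
      · rw [e0, if_neg (show ¬ Rp ![0,1,3,2] 1 2 3 by decide)]
      · rw [e1, if_neg (show ¬ Rp ![0,1,3,2] 0 2 3 by decide)]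
      · rw [e2, if_pos (show Rp ![0,1,3,2] 0 1 3 by decide)]
      · rw [e3, if_pos (show Rp ![0,1,3,2] 0 1 2 by decide)]
      · rintro R' ⟨hR', g0, g1, g2, g3⟩
        exact det hR' (by unfold IsHuntingtonCyclicOrder; decide)
          (iff_of_false (base1 g0 e0) (by decide)) (iff_of_false (base1 g1 e1) (by decide)) (iff_of_true (base0 g2 e2) (by decide)) (iff_of_true (base0 g3 e3) (by decide))
    · refine ⟨Rp ![0,3,2,1], ⟨by unfold IsHuntingtonCyclicOrder; decide, ?_, ?_, ?_, ?_⟩, ?_⟩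
      · rw [e0, if_neg (show ¬ Rp ![0,3,2,1] 1 2 3 by decide)]
      · rw [e1, if_neg (show ¬ Rp ![0,3,2,1] 0 2 3 by decide)]
      · rw [e2, if_neg (show ¬ Rp ![0,3,2,1] 0 1 3 by decide)]
      · rw [e3, if_neg (show ¬ Rp ![0,3,2,1] 0 1 2 by decide)]
      · rintro R' ⟨hR', g0, g1, g2, g3⟩
        exact det hR' (by unfold IsHuntingtonCyclicOrder; decide)
          (iff_of_false (base1 g0 e0) (by decide)) (iff_of_false (base1 g1 e1) (by decide)) (iff_of_false (base1 g2 e2) (by decide)) (iff_of_false (base1 g3 e3) (by decide))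
end

section
/- For any n with n = 0, 1, or n ≥ 4: a compatible system of total cyclic orders on all n-element subsets of Fin (n+1) (i.e., choices of a total cyclic order on each n-element subset, satisfying the Huntington axioms on each subset, that agree on common intersections and are coherent pairwise) extends uniquely to a total cyclic order on Fin (n+1); for n = 2 there are exactly two extensions. -/
/-- The Huntington axioms for a total cyclic order, restricted to a subset `S`. -/
def IsCyclicOrderOn {α : Type*} (S : Set α) (R : α → α → α → Prop) : Prop :=
  (∀ a ∈ S, ∀ b ∈ S, ∀ c ∈ S, R a b c → R b c a) ∧
  (∀ a ∈ S, ∀ b ∈ S, ∀ c ∈ S, R a b c → ¬ R c b a) ∧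
  (∀ a ∈ S, ∀ b ∈ S, ∀ c ∈ S, ∀ d ∈ S, R a b c → R a c d → R a b d) ∧
  (∀ a ∈ S, ∀ b ∈ S, ∀ c ∈ S, a ≠ b → b ≠ c → a ≠ c → R a b c ∨ R c b a)

/-- `T` is a total cyclic order on all of `Fin (n+1)` extending the given system
`R` of cyclic orders on the `n`-element subsets (the complements of points). -/
def IsExtension {n : ℕ} (R : Fin (n + 1) → Fin (n + 1) → Fin (n + 1) → Fin (n + 1) → Prop)
    (T : Fin (n + 1) → Fin (n + 1) → Fin (n + 1) → Prop) : Prop :=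
  IsCyclicOrderOn Set.univ T ∧
  ∀ i a b c, a ≠ i → b ≠ i → c ≠ i → (T a b c ↔ R i a b c)

lemma rep_false {α : Type*} {S : Set α} {R : α → α → α → Prop}
    (h : IsCyclicOrderOn S R) {a b c : α} (ha : a ∈ S) (hb : b ∈ S) (hc : c ∈ S)
    (hrep : a = b ∨ b = c ∨ a = c) : ¬ R a b c := by
  obtain ⟨cyc, asym, -, -⟩ := h
  rcases hrep with h1 | h1 | h1
  · subst h1
    intro hr
    exact asym _ ha _ hc _ ha (cyc _ ha _ ha _ hc hr) (cyc _ ha _ ha _ hc hr)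
  · subst h1
    intro hr
    exact asym _ hb _ ha _ hb (cyc _ hb _ hb _ ha (cyc _ ha _ hb _ hb hr))
      (cyc _ hb _ hb _ ha (cyc _ ha _ hb _ hb hr))
  · subst h1
    intro hr
    exact asym _ ha _ hb _ ha hr hr

lemma exists_avoid3 {m : ℕ} (h : 4 ≤ m) (a b c : Fin m) :
    ∃ i, i ≠ a ∧ i ≠ b ∧ i ≠ c := by
  have hcard : ({a, b, c} : Finset (Fin m)).card ≤ 3 := by
    calc ({a, b, c} : Finset (Fin m)).card ≤ ({b, c} : Finset (Fin m)).card + 1 :=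
          Finset.card_insert_le _ _
      _ ≤ (({c} : Finset (Fin m)).card + 1) + 1 :=
          Nat.add_le_add_right (Finset.card_insert_le _ _) 1
      _ ≤ 3 := by simp
  have : (({a, b, c} : Finset (Fin m))ᶜ).Nonempty := by
    rw [← Finset.card_pos, Finset.card_compl]
    simp only [Fintype.card_fin]
    omega
  obtain ⟨i, hi⟩ := this
  simp only [Finset.mem_compl, Finset.mem_insert, Finset.mem_singleton, not_or] at hi
  exact ⟨i, hi.1, hi.2.1, hi.2.2⟩

lemma exists_avoid4 {m : ℕ} (h : 5 ≤ m) (a b c d : Fin m) :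
    ∃ i, i ≠ a ∧ i ≠ b ∧ i ≠ c ∧ i ≠ d := by
  have hcard : ({a, b, c, d} : Finset (Fin m)).card ≤ 4 := by
    calc ({a, b, c, d} : Finset (Fin m)).card ≤ ({b, c, d} : Finset (Fin m)).card + 1 :=
          Finset.card_insert_le _ _
      _ ≤ (({c, d} : Finset (Fin m)).card + 1) + 1 :=
          Nat.add_le_add_right (Finset.card_insert_le _ _) 1
      _ ≤ ((({d} : Finset (Fin m)).card + 1) + 1) + 1 :=
          Nat.add_le_add_right (Nat.add_le_add_right (Finset.card_insert_le _ _) 1) 1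
      _ ≤ 4 := by simp
  have : (({a, b, c, d} : Finset (Fin m))ᶜ).Nonempty := by
    rw [← Finset.card_pos, Finset.card_compl]
    simp only [Fintype.card_fin]
    omega
  obtain ⟨i, hi⟩ := this
  simp only [Finset.mem_compl, Finset.mem_insert, Finset.mem_singleton, not_or] at hi
  exact ⟨i, hi.1, hi.2.1, hi.2.2.1, hi.2.2.2⟩

lemma three_le {m : ℕ} {a b c : Fin m} (hab : a ≠ b) (hbc : b ≠ c) (hac : a ≠ c) :
    3 ≤ m := by
  have h1 : ({a, b, c} : Finset (Fin m)).card = 3 := by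
    rw [Finset.card_insert_of_notMem (by simp [hab, hac]),
      Finset.card_insert_of_notMem (by simp [hbc]), Finset.card_singleton]
  calc 3 = ({a, b, c} : Finset (Fin m)).card := h1.symm
    _ ≤ Fintype.card (Fin m) := Finset.card_le_univ _
    _ = m := Fintype.card_fin m

lemma four_le {m : ℕ} {a b c d : Fin m} (hab : a ≠ b) (hac : a ≠ c) (had : a ≠ d)
    (hbc : b ≠ c) (hbd : b ≠ d) (hcd : c ≠ d) : 4 ≤ m := by
  have h1 : ({a, b, c, d} : Finset (Fin m)).card = 4 := by
    rw [Finset.card_insert_of_notMem (by simp [hab, hac, had]),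
      Finset.card_insert_of_notMem (by simp [hbc, hbd]),
      Finset.card_insert_of_notMem (by simp [hcd]), Finset.card_singleton]
  calc 4 = ({a, b, c, d} : Finset (Fin m)).card := h1.symm
    _ ≤ Fintype.card (Fin m) := Finset.card_le_univ _
    _ = m := Fintype.card_fin m

def T3a : Fin 3 → Fin 3 → Fin 3 → Prop := fun a b c =>
  (a = 0 ∧ b = 1 ∧ c = 2) ∨ (a = 1 ∧ b = 2 ∧ c = 0) ∨ (a = 2 ∧ b = 0 ∧ c = 1)

def T3b : Fin 3 → Fin 3 → Fin 3 → Prop := fun a b c =>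
  (a = 0 ∧ b = 2 ∧ c = 1) ∨ (a = 2 ∧ b = 1 ∧ c = 0) ∨ (a = 1 ∧ b = 0 ∧ c = 2)

/-- A compatible system of total cyclic orders on all `n`-element subsets of
`Fin (n+1)` extends uniquely to a total cyclic order on `Fin (n+1)` when
`n = 0`, `n = 1` or `n ≥ 4`; for `n = 2` there are exactly two extensions. -/
theorem cyclic_order_extension (n : ℕ)
    (R : Fin (n + 1) → Fin (n + 1) → Fin (n + 1) → Fin (n + 1) → Prop)
    (hax : ∀ i, IsCyclicOrderOn {x | x ≠ i} (R i))
    (hcompat : ∀ i j a b c, a ≠ i → b ≠ i → c ≠ i → a ≠ j → b ≠ j → c ≠ j →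
      (R i a b c ↔ R j a b c)) :
    ((n = 0 ∨ n = 1 ∨ 4 ≤ n) → ∃! T, IsExtension R T) ∧
    (n = 2 → ∃ T₁ T₂, T₁ ≠ T₂ ∧ IsExtension R T₁ ∧ IsExtension R T₂ ∧
      ∀ T, IsExtension R T → T = T₁ ∨ T = T₂) := by
  have Rrep : ∀ i {a b c : Fin (n+1)}, a ≠ i → b ≠ i → c ≠ i →
      (a = b ∨ b = c ∨ a = c) → ¬ R i a b c := fun i _ _ _ ha hb hc hr =>
    rep_false (hax i) ha hb hc hr
  constructor
  · -- part 1
    intro hn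
    set T : Fin (n+1) → Fin (n+1) → Fin (n+1) → Prop :=
      fun a b c => ∃ i, a ≠ i ∧ b ≠ i ∧ c ≠ i ∧ R i a b c with hTdef
    have hext : ∀ i a b c, a ≠ i → b ≠ i → c ≠ i → (T a b c ↔ R i a b c) := by
      intro i a b c ha hb hc
      constructor
      · rintro ⟨j, hja, hjb, hjc, hj⟩
        exact (hcompat j i a b c hja hjb hjc ha hb hc).mp hj
      · intro h; exact ⟨i, ha, hb, hc, h⟩
    have hdist : ∀ a b c : Fin (n+1), T a b c → a ≠ b ∧ b ≠ c ∧ a ≠ c := by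
      rintro a b c ⟨i, ha, hb, hc, h⟩
      refine ⟨?_, ?_, ?_⟩ <;> intro he <;>
        exact Rrep i ha hb hc (by tauto) h
    have hcyc : IsCyclicOrderOn Set.univ T := by
      unfold IsCyclicOrderOn
      refine ⟨?_, ?_, ?_, ?_⟩
      · rintro a - b - c - ⟨i, ha, hb, hc, h⟩
        exact ⟨i, hb, hc, ha, (hax i).1 a ha b hb c hc h⟩
      · rintro a - b - c - ⟨i, ha, hb, hc, h⟩ ⟨j, hjc, hjb, hja, hj⟩
        exact (hax i).2.1 a ha b hb c hc h
          ((hcompat j i c b a hjc hjb hja hc hb ha).mp hj)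
      · rintro a - b - c - d - h1 h2
        obtain ⟨hab, hbc, hac⟩ := hdist _ _ _ h1
        obtain ⟨-, hcd, had⟩ := hdist _ _ _ h2
        by_cases hbd : b = d
        · subst hbd
          obtain ⟨i, ha, hb, hc, h⟩ := h1
          have h2' : R i a c b := (hext i a c b ha hc hb).mp h2
          exact absurd ((hax i).1 a ha c hc b hb h2')
            ((hax i).2.1 a ha b hb c hc h)
        · have h4 : 4 ≤ n := by
            have := four_le hab hac had hbc hbd hcd
            omega
          obtain ⟨i, hia, hib, hic, hid⟩ := exists_avoid4 (by omega) a b c d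
          have r1 : R i a b c := (hext i a b c (Ne.symm hia) (Ne.symm hib) (Ne.symm hic)).mp h1
          have r2 : R i a c d := (hext i a c d (Ne.symm hia) (Ne.symm hic) (Ne.symm hid)).mp h2
          exact ⟨i, Ne.symm hia, Ne.symm hib, Ne.symm hid,
            (hax i).2.2.1 a (Ne.symm hia) b (Ne.symm hib) c (Ne.symm hic) d (Ne.symm hid) r1 r2⟩
      · rintro a - b - c - hab hbc hac
        have h4 : 4 ≤ n := by
          have := three_le hab hbc hac
          omega
        obtain ⟨i, hia, hib, hic⟩ := exists_avoid3 (by omega) a b c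
        rcases (hax i).2.2.2 a (Ne.symm hia) b (Ne.symm hib) c (Ne.symm hic) hab hbc hac with h | h
        · exact Or.inl ⟨i, Ne.symm hia, Ne.symm hib, Ne.symm hic, h⟩
        · exact Or.inr ⟨i, Ne.symm hic, Ne.symm hib, Ne.symm hia, h⟩
    have hTE : IsExtension R T := by unfold IsExtension; exact ⟨hcyc, hext⟩
    refine ⟨T, hTE, ?_⟩
    rintro T' ⟨hT'cyc, hT'ext⟩
    funext a b c
    apply propext
    by_cases hrep : a = b ∨ b = c ∨ a = c
    · constructor
      · intro h; exact absurd h (rep_false hT'cyc (Set.mem_univ a) (Set.mem_univ b)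
          (Set.mem_univ c) hrep)
      · rintro ⟨i, ha, hb, hc, h⟩
        exact absurd h (Rrep i ha hb hc hrep)
    · push_neg at hrep
      obtain ⟨hab, hbc, hac⟩ := hrep
      have h4 : 4 ≤ n := by
        have := three_le hab hbc hac
        omega
      obtain ⟨i, hia, hib, hic⟩ := exists_avoid3 (by omega) a b c
      rw [hT'ext i a b c (Ne.symm hia) (Ne.symm hib) (Ne.symm hic),
        ← hext i a b c (Ne.symm hia) (Ne.symm hib) (Ne.symm hic)]
  · -- part 2 : n = 2
    intro hn
    subst hn
    have t3arep : ∀ a b c : Fin 3, (a = b ∨ b = c ∨ a = c) → ¬ T3a a b c := by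
      unfold T3a; decide
    have t3brep : ∀ a b c : Fin 3, (a = b ∨ b = c ∨ a = c) → ¬ T3b a b c := by
      unfold T3b; decide
    have pigeon : ∀ i a b c : Fin 3, a ≠ i → b ≠ i → c ≠ i →
        (a = b ∨ b = c ∨ a = c) := by decide
    have hexta : ∀ i a b c : Fin 3, a ≠ i → b ≠ i → c ≠ i → (T3a a b c ↔ R i a b c) := by
      intro i a b c ha hb hc
      have hrep := pigeon i a b c ha hb hc
      exact iff_of_false (t3arep a b c hrep) (Rrep i ha hb hc hrep)
    have hextb : ∀ i a b c : Fin 3, a ≠ i → b ≠ i → c ≠ i → (T3b a b c ↔ R i a b c) := by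
      intro i a b c ha hb hc
      have hrep := pigeon i a b c ha hb hc
      exact iff_of_false (t3brep a b c hrep) (Rrep i ha hb hc hrep)
    have hcyca : IsCyclicOrderOn Set.univ T3a := by
      unfold IsCyclicOrderOn T3a
      simp only [Set.mem_univ, forall_true_left, true_implies]
      exact ⟨by decide, by decide, by decide, by decide⟩
    have hcycb : IsCyclicOrderOn Set.univ T3b := by
      unfold IsCyclicOrderOn T3b
      simp only [Set.mem_univ, forall_true_left, true_implies]
      exact ⟨by decide, by decide, by decide, by decide⟩
    have hTEa : IsExtension R T3a := by unfold IsExtension; exact ⟨hcyca, hexta⟩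
    have hTEb : IsExtension R T3b := by unfold IsExtension; exact ⟨hcycb, hextb⟩
    refine ⟨T3a, T3b, ?_, hTEa, hTEb, ?_⟩
    · intro h
      have : T3a 0 1 2 ↔ T3b 0 1 2 := by rw [h]
      revert this; unfold T3a T3b; decide
    · rintro T ⟨hTcyc, hText⟩
      have hrepf : ∀ a b c : Fin 3, (a = b ∨ b = c ∨ a = c) → ¬ T a b c :=
        fun a b c hr => rep_false hTcyc (Set.mem_univ a) (Set.mem_univ b) (Set.mem_univ c) hr
      obtain ⟨cyc, asym, -, tot⟩ := hTcyc
      have cyc' : ∀ a b c : Fin 3, T a b c → T b c a := fun a b c h =>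
        cyc a (Set.mem_univ a) b (Set.mem_univ b) c (Set.mem_univ c) h
      have asym' : ∀ a b c : Fin 3, T a b c → ¬ T c b a := fun a b c h =>
        asym a (Set.mem_univ a) b (Set.mem_univ b) c (Set.mem_univ c) h
      have sixcases : ∀ a b c : Fin 3, a ≠ b → b ≠ c → a ≠ c →
          ((a = 0 ∧ b = 1 ∧ c = 2) ∨ (a = 1 ∧ b = 2 ∧ c = 0) ∨ (a = 2 ∧ b = 0 ∧ c = 1) ∨
           (a = 0 ∧ b = 2 ∧ c = 1) ∨ (a = 2 ∧ b = 1 ∧ c = 0) ∨ (a = 1 ∧ b = 0 ∧ c = 2)) := by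
        decide
      rcases tot 0 (Set.mem_univ _) 1 (Set.mem_univ _) 2 (Set.mem_univ _)
          (by decide) (by decide) (by decide) with h012 | h210
      · left
        have t120 : T 1 2 0 := cyc' _ _ _ h012
        have t201 : T 2 0 1 := cyc' _ _ _ t120
        have n210 : ¬ T 2 1 0 := asym' _ _ _ h012
        have n021 : ¬ T 0 2 1 := fun h => n210 (cyc' _ _ _ h)
        have n102 : ¬ T 1 0 2 := fun h => n021 (cyc' _ _ _ h)
        funext a b c
        apply propext
        by_cases hrep : a = b ∨ b = c ∨ a = c
        · exact iff_of_false (hrepf a b c hrep) (t3arep a b c hrep)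
        · push_neg at hrep
          obtain ⟨hab, hbc, hac⟩ := hrep
          rcases sixcases a b c hab hbc hac with
            ⟨h1,h2,h3⟩|⟨h1,h2,h3⟩|⟨h1,h2,h3⟩|⟨h1,h2,h3⟩|⟨h1,h2,h3⟩|⟨h1,h2,h3⟩ <;>
            subst h1 <;> subst h2 <;> subst h3 <;> unfold T3a
          · exact iff_of_true h012 (by decide)
          · exact iff_of_true t120 (by decide)
          · exact iff_of_true t201 (by decide)
          · exact iff_of_false n021 (by decide)
          · exact iff_of_false n210 (by decide)
          · exact iff_of_false n102 (by decide)
      · right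
        have t102 : T 1 0 2 := cyc' _ _ _ h210
        have t021 : T 0 2 1 := cyc' _ _ _ t102
        have n012 : ¬ T 0 1 2 := asym' _ _ _ h210
        have n120 : ¬ T 1 2 0 := fun h => n012 (cyc' _ _ _ (cyc' _ _ _ h))
        have n201 : ¬ T 2 0 1 := fun h => n012 (cyc' _ _ _ h)
        funext a b c
        apply propext
        by_cases hrep : a = b ∨ b = c ∨ a = c
        · exact iff_of_false (hrepf a b c hrep) (t3brep a b c hrep)
        · push_neg at hrep
          obtain ⟨hab, hbc, hac⟩ := hrep
          rcases sixcases a b c hab hbc hac with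
            ⟨h1,h2,h3⟩|⟨h1,h2,h3⟩|⟨h1,h2,h3⟩|⟨h1,h2,h3⟩|⟨h1,h2,h3⟩|⟨h1,h2,h3⟩ <;>
            subst h1 <;> subst h2 <;> subst h3 <;> unfold T3b
          · exact iff_of_false n012 (by decide)
          · exact iff_of_false n120 (by decide)
          · exact iff_of_false n201 (by decide)
          · exact iff_of_true t021 (by decide)
          · exact iff_of_true h210 (by decide)
          · exact iff_of_true t102 (by decide)
end

section
/- For a permutation ω of Fin (k+1), deleting the entry ω(i) and monotonically reordering the remaining values yields a well-defined permutation dᵢ(ω) of Fin k, and these face maps satisfy the simplicial identity dᵢ ∘ dⱼ = dⱼ₋₁ ∘ dᵢ for i < j. -/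
/-!
`ω.face i` is `ω` restricted to `{x ≠ i} → {x ≠ ω i}`, read through the order isomorphisms
`i.succAbove` and `(ω i).succAbove`. Both sides of the simplicial identity, followed by the
two-hole embedding `Fin k → Fin (k + 2)` missing `ω j` and `ω i`, equal `ω` precomposed with
the two-hole embedding missing `j` and `i`; an order embedding of `Fin k` into `Fin (k + 2)`
is determined by the two holes, so it does not matter in which order they are removed.
-/

namespace Fin

lemma succAbove_succAbove_eq_of_succAbove_eq {n : ℕ} {p r : Fin (n + 2)} {q s : Fin (n + 1)}
    (hq : p.succAbove q = r) (hs : r.succAbove s = p) (x : Fin n) :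
    r.succAbove (s.succAbove x) = p.succAbove (q.succAbove x) := by
  subst hq
  obtain rfl : s = q.predAbove p :=
    succAbove_right_injective (hs.trans (succAbove_succAbove_predAbove p q).symm)
  exact succAbove_succAbove_succAbove_predAbove p q x

end Fin

namespace Equiv.Perm

variable {k : ℕ}

def face (ω : Perm (Fin (k + 1))) (i : Fin (k + 1)) : Perm (Fin k) :=
  (finSuccAboveEquiv i).trans <|
    (ω.subtypeEquiv (p := (· ≠ i)) (q := (· ≠ ω i)) fun _ => ω.injective.ne_iff.symm).trans
      (finSuccAboveEquiv (ω i)).symm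

lemma succAbove_face_apply (ω : Perm (Fin (k + 1))) (i : Fin (k + 1)) (x : Fin k) :
    (ω i).succAbove (ω.face i x) = ω (i.succAbove x) :=
  congrArg Subtype.val ((finSuccAboveEquiv (ω i)).apply_symm_apply _)

lemma succAbove_succAbove_face_face (ω : Perm (Fin (k + 2))) (j : Fin (k + 2)) (i : Fin (k + 1))
    (x : Fin k) :
    (ω j).succAbove ((ω.face j i).succAbove ((ω.face j).face i x)) =
      ω (j.succAbove (i.succAbove x)) := by
  rw [succAbove_face_apply, succAbove_face_apply]

lemma face_face_of_castSucc_lt (ω : Perm (Fin (k + 2))) {i : Fin (k + 1)} {j : Fin (k + 2)}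
    (hij : i.castSucc < j) (hj : j ≠ 0) :
    (ω.face j).face i = (ω.face i.castSucc).face (j.pred hj) := by
  have hji : j.succAbove i = i.castSucc := j.succAbove_of_castSucc_lt i hij
  have hij' : i.castSucc.succAbove (j.pred hj) = j := i.castSucc.succAbove_pred_of_lt j hij
  have hq : (ω j).succAbove (ω.face j i) = ω i.castSucc := by rw [succAbove_face_apply, hji]
  have hs : (ω i.castSucc).succAbove (ω.face i.castSucc (j.pred hj)) = ω j := by
    rw [succAbove_face_apply, hij']
  ext x : 1
  apply Fin.succAbove_right_injective (p := ω.face j i)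
  apply Fin.succAbove_right_injective (p := ω j)
  calc (ω j).succAbove ((ω.face j i).succAbove ((ω.face j).face i x))
      = ω (j.succAbove (i.succAbove x)) := succAbove_succAbove_face_face ω j i x
    _ = ω (i.castSucc.succAbove ((j.pred hj).succAbove x)) :=
      congrArg ω (Fin.succAbove_succAbove_eq_of_succAbove_eq hji hij' x).symm
    _ = (ω i.castSucc).succAbove ((ω.face i.castSucc (j.pred hj)).succAbove
          ((ω.face i.castSucc).face (j.pred hj) x)) :=
      (succAbove_succAbove_face_face ω i.castSucc (j.pred hj) x).symm
    _ = (ω j).succAbove ((ω.face j i).succAbove ((ω.face i.castSucc).face (j.pred hj) x)) :=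
      Fin.succAbove_succAbove_eq_of_succAbove_eq hq hs _

end Equiv.Perm

/-- Deleting the entry `ω i` from a permutation `ω` of `Fin (k+1)` and monotonically
relabeling yields a well-defined permutation `d k i ω` of `Fin k` (characterized by
`(ω i).succAbove (d k i ω j) = ω (i.succAbove j)`), and these face maps satisfy the
simplicial identity `dᵢ ∘ dⱼ = dⱼ₋₁ ∘ dᵢ` for `i < j`. -/
theorem perm_face_maps_exist :
    ∃ d : ∀ k : ℕ, Fin (k + 1) → Equiv.Perm (Fin (k + 1)) → Equiv.Perm (Fin k),
      (∀ (k : ℕ) (i : Fin (k + 1)) (ω : Equiv.Perm (Fin (k + 1))) (j : Fin k),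
        (ω i).succAbove (d k i ω j) = ω (i.succAbove j)) ∧
      (∀ (k : ℕ) (i : Fin (k + 1)) (j : Fin (k + 2)) (hij : i.castSucc < j) (hj : j ≠ 0)
        (ω : Equiv.Perm (Fin (k + 2))),
        d k i (d (k + 1) j ω) = d k (j.pred hj) (d (k + 1) i.castSucc ω)) :=
  ⟨fun _ i ω => ω.face i, fun _ i ω => ω.succAbove_face_apply i,
    fun _ _ _ hij hj ω => ω.face_face_of_castSucc_lt hij hj⟩
end

section
/- The face maps dᵢ on permutations descend to circular permutations: if ω and ω' are in the same right coset of the cyclic subgroup of S_{k+1} (i.e., ω' = ω ∘ c^m for the standard (k+1)-cycle c), then for each i the circular permutations determined by the deletions of ω(i) from ω and of the corresponding element from ω' agree as circular permutations of k elements. -/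
open Equiv

def faceMap {k : ℕ} (i : Fin (k + 1)) (ω : Equiv.Perm (Fin (k + 1))) : Equiv.Perm (Fin k) :=
  Equiv.removeNone ((finSuccEquiv' i).symm.trans (ω.trans (finSuccEquiv' (ω i))))

lemma faceMap_spec {k : ℕ} (i : Fin (k + 1)) (ω : Equiv.Perm (Fin (k + 1))) (x : Fin k) :
    (ω i).succAbove (faceMap i ω x) = ω (i.succAbove x) := by
  have h : ∃ y, ((finSuccEquiv' i).symm.trans (ω.trans (finSuccEquiv' (ω i)))) (some x) = some y := by
    simp only [trans_apply, finSuccEquiv'_symm_some]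
    rcases Fin.exists_succAbove_eq (x := ω (i.succAbove x)) (y := ω i)
      (fun h => (Fin.succAbove_ne i x) (ω.injective h)) with ⟨y, hy⟩
    exact ⟨y, by rw [← hy, finSuccEquiv'_succAbove]⟩
  have := congrArg (finSuccEquiv' (ω i)).symm (Equiv.removeNone_some _ h)
  simp only [trans_apply, finSuccEquiv'_symm_some, Equiv.symm_apply_apply] at this
  exact this

lemma faceMap_unique {k : ℕ} (i : Fin (k + 1)) (ω : Equiv.Perm (Fin (k + 1))) (x y : Fin k)
    (h : (ω i).succAbove y = ω (i.succAbove x)) : faceMap i ω x = y :=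
  Fin.succAbove_right_injective (p := ω i) (by rw [faceMap_spec, h])

lemma faceMap_mul {k : ℕ} (i : Fin (k + 1)) (σ τ : Equiv.Perm (Fin (k + 1))) :
    faceMap i (σ * τ) = faceMap (τ i) σ * faceMap i τ := by
  refine Equiv.Perm.ext fun x => faceMap_unique i (σ * τ) x _ ?_
  show ((σ * τ) i).succAbove (faceMap (τ i) σ (faceMap i τ x)) = _
  rw [Equiv.Perm.mul_apply, faceMap_spec, faceMap_spec, Equiv.Perm.mul_apply]

lemma faceMap_one {k : ℕ} (i : Fin (k + 1)) : faceMap i 1 = 1 :=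
  Equiv.Perm.ext fun x => faceMap_unique i 1 x x rfl

lemma faceMap_finRotate_last {k : ℕ} :
    faceMap (Fin.last k) (finRotate (k + 1)) = 1 := by
  match k with
  | 0 => exact Subsingleton.elim _ _
  | k + 1 =>
    refine Equiv.Perm.ext fun x => faceMap_unique _ _ x x ?_
    rw [finRotate_last, Fin.zero_succAbove, Fin.succAbove_last, finRotate_succ_apply,
      Fin.coeSucc_eq_succ]

lemma faceMap_finRotate {k : ℕ} (j : Fin (k + 1)) (hj : j ≠ Fin.last k) :
    faceMap j (finRotate (k + 1)) = finRotate k := by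
  match k with
  | 0 => exact Subsingleton.elim _ _
  | k + 1 =>
    refine Equiv.Perm.ext fun x => faceMap_unique j _ x (finRotate (k + 1) x) ?_
    have hjv : j.val ≤ k := by
      have := j.isLt
      have : j.val ≠ k + 1 := fun h => hj (Fin.ext h)
      omega
    have key : ∀ n : ℕ, ∀ y : Fin (n + 1),
        ((finRotate (n + 1)) y).val = if y.val = n then 0 else y.val + 1 := by
      intro n y
      rw [coe_finRotate]
      rcases eq_or_ne y (Fin.last n) with rfl | hyy
      · simp [Fin.last]
      · rw [if_neg hyy, if_neg fun h => hyy (Fin.ext (by simpa [Fin.last] using h))]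
    apply Fin.ext
    simp only [Fin.succAbove, Fin.lt_def, Fin.coe_castSucc, Fin.val_succ, apply_ite Fin.val,
      key, Fin.coe_castSucc, Fin.val_succ]
    have hxv := x.isLt
    split_ifs <;> omega

lemma faceMap_finRotate_pow {k : ℕ} (j : Fin (k + 1)) (m : ℕ) :
    ∃ m', faceMap j ((finRotate (k + 1)) ^ m) = (finRotate k) ^ m' := by
  induction m generalizing j with
  | zero => exact ⟨0, by simpa using faceMap_one j⟩
  | succ m ih =>
    rw [pow_succ, faceMap_mul]
    rcases ih (finRotate (k + 1) j) with ⟨m', hm'⟩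
    rcases eq_or_ne j (Fin.last k) with rfl | hj
    · exact ⟨m', by rw [hm', faceMap_finRotate_last, mul_one]⟩
    · exact ⟨m' + 1, by rw [hm', faceMap_finRotate j hj, pow_succ]⟩

/-- The face maps on permutations descend to circular permutations: if
`ω' = ω ∘ cᵐ` lies in the same right coset of the cyclic subgroup as `ω`, and the
position `i'` in `ω'` carries the same value as the position `i` in `ω`, then the
two face deletions agree up to a cyclic rotation, i.e. they determine the same
circular permutation of `k` elements. -/
theorem faceMap_descends_to_circular (k : ℕ) (ω ω' : Equiv.Perm (Fin (k + 1)))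
    (m : ℕ) (i i' : Fin (k + 1))
    (h : ω' = ω * (finRotate (k + 1)) ^ m) (hval : ω' i' = ω i) :
    ∃ m' : ℕ, faceMap i' ω' = faceMap i ω * (finRotate k) ^ m' := by
  subst h
  have hi : ((finRotate (k + 1)) ^ m) i' = i := ω.injective hval
  rcases faceMap_finRotate_pow i' m with ⟨m', hm'⟩
  exact ⟨m', by rw [faceMap_mul, hi, hm']⟩
end

section
/- The 2nd simplicial homology of the 3-skeleton SC(3) of the simplicial set of circular permutations is ℤ: the simplicial chain complex generated by 1 vertex (the circular permutation of [0]), 1 edge, 2 triangles (the even and odd circular permutations of [2]), and 6 tetrahedra (the circular permutations of [3]), with the boundary maps given by bead deletion, has H₂ ≅ ℤ and H₁ = 0, matching the homology of the 2-sphere in these degrees. -/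
/-!
Every tetrahedron ⟨0abc⟩ has as many even faces in even position as in odd position, and likewise
for odd faces, so `∂₃ = 0`. All three faces of a triangle are the unique edge, so
`∂₂ v = (1 - 1 + 1)(v₀ + v₁)`; this is surjective, whence `H₁ = 0`, and `H₂ = ker ∂₂ ≅ ℤ`
via `v ↦ v₀`.
-/

/-- Parities of the four faces of each of the 6 circular permutations of `[3]`
(rows indexed by ⟨0123⟩, ⟨0231⟩, ⟨0312⟩, ⟨0213⟩, ⟨0132⟩, ⟨0321⟩; the face of
parity 0 is the even circular permutation ⟨012⟩, parity 1 the odd one ⟨210⟩). -/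
def facePar : Fin 6 → Fin 4 → Fin 2 :=
  ![![0, 0, 0, 0], ![0, 0, 1, 1], ![0, 1, 1, 0], ![1, 0, 0, 1], ![1, 1, 0, 0], ![1, 1, 1, 1]]

/-- Boundary `∂₃ : C₃ = ℤ⁶ → C₂ = ℤ²`: alternating sum of the faces of the 6
tetrahedra (the circular permutations of `[3]`), faces given by bead deletion. -/
noncomputable def bdry3 : (Fin 6 → ℤ) →ₗ[ℤ] (Fin 2 → ℤ) :=
  Matrix.toLin' (fun s θ => ∑ i : Fin 4, if facePar θ i = s then (-1 : ℤ) ^ (i : ℕ) else 0)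

/-- Boundary `∂₂ : C₂ = ℤ² → C₁ = ℤ`: each triangle has its 3 faces equal to the
unique edge, with alternating signs. -/
noncomputable def bdry2 : (Fin 2 → ℤ) →ₗ[ℤ] (Fin 1 → ℤ) :=
  Matrix.toLin' (fun _ _ => ∑ i : Fin 3, (-1 : ℤ) ^ (i : ℕ))

/-- Boundary `∂₁ : C₁ = ℤ → C₀ = ℤ`: the two faces of the edge are the vertex. -/
noncomputable def bdry1 : (Fin 1 → ℤ) →ₗ[ℤ] (Fin 1 → ℤ) :=
  Matrix.toLin' (fun _ _ => ∑ i : Fin 2, (-1 : ℤ) ^ (i : ℕ))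

noncomputable def Submodule.quotComapRangeEquivOfEqZero {R L M : Type*} [Ring R]
    [AddCommGroup L] [AddCommGroup M] [Module R L] [Module R M]
    (Z : Submodule R M) {g : L →ₗ[R] M} (hg : g = 0) :
    (Z ⧸ Submodule.comap Z.subtype (LinearMap.range g)) ≃ₗ[R] Z :=
  Submodule.quotEquivOfEqBot _ (by simp [hg])

theorem bdry3_eq_zero : bdry3 = 0 := by
  refine Matrix.toLin'.map_eq_zero_iff.2 (Matrix.ext fun s θ => ?_)
  fin_cases s <;> fin_cases θ <;> decide

theorem bdry2_apply (v : Fin 2 → ℤ) : bdry2 v = fun _ => v 0 + v 1 := by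
  funext
  erw [bdry2, Matrix.toLin'_apply]
  simp [Matrix.mulVec, dotProduct, Fin.sum_univ_two, Fin.sum_univ_three]

theorem bdry2_surjective : Function.Surjective bdry2 := fun y =>
  ⟨![y 0, 0], by funext j; fin_cases j; simp [bdry2_apply]⟩

theorem mem_ker_bdry2 {v : Fin 2 → ℤ} : v ∈ LinearMap.ker bdry2 ↔ v 1 = -v 0 := by
  rw [LinearMap.mem_ker, bdry2_apply, funext_iff]
  simp only [Pi.zero_apply, forall_const]
  omega

noncomputable def kerBdry2Equiv : LinearMap.ker bdry2 ≃ₗ[ℤ] ℤ where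
  toFun v := v.1 0
  map_add' _ _ := rfl
  map_smul' _ _ := rfl
  invFun x := ⟨![x, -x], mem_ker_bdry2.2 rfl⟩
  left_inv := by
    rintro ⟨v, hv⟩
    ext j
    fin_cases j
    · rfl
    · exact (mem_ker_bdry2.1 hv).symm
  right_inv _ := rfl

/-- The chain complex of the 3-skeleton `SC(3)` of the simplicial set of circular
permutations has `H₂ ≅ ℤ` and `H₁ = 0`, matching the homology of the 2-sphere. -/
theorem homology_SC3 :
    Nonempty ((↥(LinearMap.ker bdry2) ⧸
        Submodule.comap (LinearMap.ker bdry2).subtype (LinearMap.range bdry3)) ≃ₗ[ℤ] ℤ) ∧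
    Submodule.comap (LinearMap.ker bdry1).subtype (LinearMap.range bdry2) = ⊤ := by
  refine ⟨⟨(Submodule.quotComapRangeEquivOfEqZero _ bdry3_eq_zero).trans kerBdry2Equiv⟩, ?_⟩
  rw [Submodule.comap_subtype_eq_top, LinearMap.range_eq_top.2 bdry2_surjective]
  exact le_top
end
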